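/- Let Γ be a finite simple graph with vertices weighted by positive integers p_i, and suppose all vertex weights are such that we work with the monoid algebra: the algebra A(Γ) = k⟨x_i : i ∈ V⟩/([x_{a_j}, x_{b_j}] : j ∈ E) where all commutators are taken with sign +1 (i.e., relations x_a x_b = x_b x_a for each edge) has Hilbert series equal to the multiplicative inverse of the clique polynomial c_Γ(z) = Σ_{i,j} (−1)^i c_{i,j} z^j, where c_{i,j} is the number of complete subgraphs of Γ with i vertices whose weights sum to j. -/

import Mathlib

open scoped Classical

/-- The commutation relations on the free algebra determined by the edges of a
graph: `x_a x_b = x_b x_a` whenever `a` and `b` are adjacent. -/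
def commRel (k : Type*) [Field k] {n : ℕ} (G : SimpleGraph (Fin n)) :
    FreeAlgebra k (Fin n) → FreeAlgebra k (Fin n) → Prop := fun u v =>
  ∃ a b : Fin n, G.Adj a b ∧ u = FreeAlgebra.ι k a * FreeAlgebra.ι k b ∧
    v = FreeAlgebra.ι k b * FreeAlgebra.ι k a

/-- The algebra `A(Γ) = k⟨x_i⟩/(x_a x_b − x_b x_a, ab ∈ E)`. -/
abbrev GraphAlgebra (k : Type*) [Field k] {n : ℕ} (G : SimpleGraph (Fin n)) :=
  RingQuot (commRel k G)

/-- The degree-`d` component of the quotient algebra, with respect to the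
grading in which `x_i` has degree `p i`: the span of the images of the
monomials of weight `d`. -/
noncomputable def degComp (k : Type*) [Field k] {n : ℕ} (G : SimpleGraph (Fin n))
    (p : Fin n → ℕ) (d : ℕ) : Submodule k (GraphAlgebra k G) :=
  Submodule.span k {a | ∃ l : List (Fin n), (l.map p).sum = d ∧
    a = RingQuot.mkAlgHom k (commRel k G) ((l.map (FreeAlgebra.ι k)).prod)}

/-- The Hilbert series of `A(Γ)`. -/
noncomputable def hilbertSeries (k : Type*) [Field k] {n : ℕ} (G : SimpleGraph (Fin n))
    (p : Fin n → ℕ) : PowerSeries ℤ :=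
  PowerSeries.mk fun d => (Module.finrank k (degComp k G p d) : ℤ)

/-- The clique polynomial `c_Γ(z) = Σ_{i,j} (−1)^i c_{i,j} z^j`, where `c_{i,j}`
is the number of complete subgraphs of `Γ` with `i` vertices whose weights sum
to `j`, as a power series. -/
noncomputable def cliquePoly {n : ℕ} (G : SimpleGraph (Fin n)) (p : Fin n → ℕ) :
    PowerSeries ℤ :=
  PowerSeries.mk fun j =>
    ∑ S ∈ (Finset.univ : Finset (Fin n)).powerset.filter (fun S : Finset (Fin n) => G.IsClique (S : Set (Fin n))),
      if ∑ i ∈ S, p i = j then (-1 : ℤ) ^ S.card else 0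

/-!
`A(Γ)` is the monoid algebra of the trace monoid `M(Γ)`, the free monoid on the vertices modulo
`ab = ba` for adjacent `a, b`; so `dim A_d` is the number of traces of weight `d`, and the
coefficient of `z^d` in `H_A · c_Γ` is `∑ (-1)^|S|` over pairs `(S, t)` of a clique `S` and a trace
`t` of total weight `d`. For `d > 0` this sum cancels under a sign-reversing involution: pick a
letter `a` adjacent to all of `S` that lies in `S` or is a first letter of `t`, and move it from `S`
to the front of `t` or back.

The combinatorics of traces rests on the projection lemma: two words represent the same trace iff
their restrictions to every pair of non-adjacent letters coincide. It gives left cancellation and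
the description of the first letters of `a t`.
-/

section

variable {α : Type*}

def traceCon (G : SimpleGraph α) : Con (FreeMonoid α) :=
  conGen fun x y => ∃ a b, G.Adj a b ∧
    x = FreeMonoid.of a * FreeMonoid.of b ∧ y = FreeMonoid.of b * FreeMonoid.of a

abbrev TraceMonoid (G : SimpleGraph α) := (traceCon G).Quotient

lemma FreeMonoid.eq_of_of_dvd_of_mul {a c : α} {x : FreeMonoid α}
    (h : FreeMonoid.of a ∣ FreeMonoid.of c * x) : a = c := by
  obtain ⟨y, hy⟩ := h
  simpa using congrArg (fun z => z.toList.head?) hy.symm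

namespace TraceMonoid

variable {G : SimpleGraph α} {M : Type*} [Monoid M]

def mk : FreeMonoid α →* TraceMonoid G := (traceCon G).mk'

def of (a : α) : TraceMonoid G := mk (FreeMonoid.of a)

lemma mk_surjective : Function.Surjective (mk : FreeMonoid α → TraceMonoid G) :=
  Con.mk'_surjective

lemma of_mul_of_comm {a b : α} (h : G.Adj a b) : (of a * of b : TraceMonoid G) = of b * of a := by
  simp only [of, ← map_mul]
  exact (Con.eq _).2 (ConGen.Rel.of _ _ ⟨a, b, h, rfl, rfl⟩)

lemma mk_of_mul (a : α) (x : FreeMonoid α) :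
    (mk (FreeMonoid.of a * x) : TraceMonoid G) = of a * mk x :=
  map_mul _ _ _

def lift (f : α → M) (hf : ∀ ⦃a b⦄, G.Adj a b → Commute (f a) (f b)) : TraceMonoid G →* M :=
  (traceCon G).lift (FreeMonoid.lift f) <| Con.conGen_le.2 <| by
    rintro _ _ ⟨a, b, hab, rfl, rfl⟩
    simpa [Con.ker_rel] using (hf hab).eq

@[simp]
lemma lift_mk (f : α → M) (hf : ∀ ⦃a b⦄, G.Adj a b → Commute (f a) (f b)) (x : FreeMonoid α) :
    lift f hf (mk x) = FreeMonoid.lift f x :=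
  rfl

@[simp]
lemma lift_of (f : α → M) (hf : ∀ ⦃a b⦄, G.Adj a b → Commute (f a) (f b)) (a : α) :
    lift f hf (of a) = f a :=
  rfl

@[ext]
lemma hom_ext {f g : TraceMonoid G →* M} (h : ∀ a, f (of a) = g (of a)) : f = g :=
  Con.hom_ext <| FreeMonoid.hom_eq h

noncomputable def proj (a b : α) : FreeMonoid α →* FreeMonoid α :=
  FreeMonoid.lift fun c => if c = a ∨ c = b then FreeMonoid.of c else 1

lemma proj_of_mul_of_mem {a b c : α} (h : c = a ∨ c = b) (x : FreeMonoid α) :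
    proj a b (FreeMonoid.of c * x) = FreeMonoid.of c * proj a b x := by
  simp [proj, h]

lemma proj_of_mul_of_ne {a b c : α} (ha : c ≠ a) (hb : c ≠ b) (x : FreeMonoid α) :
    proj a b (FreeMonoid.of c * x) = proj a b x := by
  simp [proj, ha, hb]

lemma traceCon_le_ker_proj {a b : α} (h : ¬ G.Adj a b) : traceCon G ≤ Con.ker (proj a b) := by
  refine Con.conGen_le.2 ?_
  rintro _ _ ⟨c, d, hcd, rfl, rfl⟩
  rw [Con.ker_rel]
  by_cases hc : c = a ∨ c = b <;> by_cases hd : d = a ∨ d = b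
  · exfalso
    rcases hc with rfl | rfl <;> rcases hd with rfl | rfl
    exacts [G.irrefl hcd, h hcd, h hcd.symm, G.irrefl hcd]
  all_goals simp [proj, hc, hd]

lemma proj_eq_of_mk_eq {x y : FreeMonoid α} (hxy : (mk x : TraceMonoid G) = mk y) {a b : α}
    (hab : ¬ G.Adj a b) : proj a b x = proj a b y :=
  traceCon_le_ker_proj hab ((Con.eq _).1 hxy)

theorem of_dvd_mk_iff {a : α} {x : FreeMonoid α} :
    (of a ∣ (mk x : TraceMonoid G)) ↔ ∀ c, ¬ G.Adj a c → FreeMonoid.of a ∣ proj a c x := by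
  constructor
  · rintro ⟨t, ht⟩ c hac
    obtain ⟨y, rfl⟩ := mk_surjective t
    rw [← mk_of_mul] at ht
    rw [proj_eq_of_mk_eq ht hac, proj_of_mul_of_mem (Or.inl rfl)]
    exact dvd_mul_right _ _
  · induction x using FreeMonoid.inductionOn' with
    | one =>
      intro h
      obtain ⟨y, hy⟩ := h a G.irrefl
      have := congrArg FreeMonoid.length hy
      simp at this
      omega
    | of_mul c x ih =>
      intro h
      by_cases hca : c = a
      · subst hca
        exact ⟨mk x, mk_of_mul _ _⟩
      have hac : G.Adj a c := by
        by_contra hac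
        have := h c hac
        rw [proj_of_mul_of_mem (Or.inr rfl)] at this
        exact hca (FreeMonoid.eq_of_of_dvd_of_mul this).symm
      obtain ⟨t, ht⟩ := ih fun d had => by
        have hcd : c ≠ d := by rintro rfl; exact had hac
        simpa [proj_of_mul_of_ne hca hcd] using h d had
      refine ⟨of c * t, ?_⟩
      rw [mk_of_mul, ht, ← mul_assoc, of_mul_of_comm hac.symm, mul_assoc]

lemma proj_of_mul_cancel {a b c : α} {x y : FreeMonoid α}
    (h : proj a b (FreeMonoid.of c * x) = proj a b (FreeMonoid.of c * y)) :
    proj a b x = proj a b y := by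
  by_cases hc : c = a ∨ c = b
  · rw [proj_of_mul_of_mem hc, proj_of_mul_of_mem hc] at h
    exact mul_left_cancel h
  · rw [not_or] at hc
    rwa [proj_of_mul_of_ne hc.1 hc.2, proj_of_mul_of_ne hc.1 hc.2] at h

theorem mk_eq_mk_iff {x y : FreeMonoid α} :
    (mk x : TraceMonoid G) = mk y ↔ ∀ a b, ¬ G.Adj a b → proj a b x = proj a b y := by
  refine ⟨fun h a b hab => proj_eq_of_mk_eq h hab, fun h => ?_⟩
  induction x using FreeMonoid.inductionOn' generalizing y with
  | one =>
    induction y using FreeMonoid.inductionOn' with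
    | one => rfl
    | of_mul a y =>
      have := congrArg FreeMonoid.length (h a a G.irrefl)
      simp [proj_of_mul_of_mem] at this
      omega
  | of_mul a x ih =>
    obtain ⟨t, ht⟩ : of a ∣ (mk y : TraceMonoid G) := of_dvd_mk_iff.2 fun c hac => by
      rw [← h a c hac, proj_of_mul_of_mem (Or.inl rfl)]
      exact dvd_mul_right _ _
    obtain ⟨y', rfl⟩ := mk_surjective t
    rw [← mk_of_mul] at ht
    rw [ht, mk_of_mul, mk_of_mul, ih fun b c hbc =>
      proj_of_mul_cancel ((h b c hbc).trans (proj_eq_of_mk_eq ht hbc))]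

lemma of_mul_left_cancel {a : α} {s t : TraceMonoid G} (h : of a * s = of a * t) : s = t := by
  obtain ⟨x, rfl⟩ := mk_surjective s
  obtain ⟨y, rfl⟩ := mk_surjective t
  rw [← mk_of_mul, ← mk_of_mul, mk_eq_mk_iff] at h
  exact mk_eq_mk_iff.2 fun b c hbc => proj_of_mul_cancel (h b c hbc)

theorem of_dvd_of_mul_iff {a b : α} (hab : a ≠ b) {t : TraceMonoid G} :
    of b ∣ of a * t ↔ G.Adj a b ∧ of b ∣ t := by
  refine ⟨fun h => ?_, fun ⟨hadj, s, hs⟩ => ⟨of a * s, ?_⟩⟩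
  · obtain ⟨x, rfl⟩ := mk_surjective t
    rw [← mk_of_mul, of_dvd_mk_iff] at h
    have hadj : G.Adj a b := by
      by_contra hadj
      have := h a fun h' => hadj h'.symm
      rw [proj_of_mul_of_mem (Or.inr rfl)] at this
      exact hab (FreeMonoid.eq_of_of_dvd_of_mul this).symm
    refine ⟨hadj, of_dvd_mk_iff.2 fun c hbc => ?_⟩
    have hac : a ≠ c := by rintro rfl; exact hbc hadj.symm
    simpa [proj_of_mul_of_ne hab hac] using h c hbc
  · rw [hs, ← mul_assoc, of_mul_of_comm hadj, mul_assoc]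

lemma exists_of_dvd {t : TraceMonoid G} (ht : t ≠ 1) : ∃ a, of a ∣ t := by
  obtain ⟨x, rfl⟩ := mk_surjective t
  induction x using FreeMonoid.inductionOn' with
  | one => exact absurd (map_one _) ht
  | of_mul a x => exact ⟨a, mk x, mk_of_mul a x⟩

section Weight

variable (p : α → ℕ)

def weight (t : TraceMonoid G) : ℕ :=
  ((lift (fun a => Multiplicative.ofAdd (p a)) fun _ _ _ => Commute.all _ _) t).toAdd

@[simp]
lemma weight_one : weight p (1 : TraceMonoid G) = 0 := by
  simp [weight]

@[simp]
lemma weight_mul (s t : TraceMonoid G) : weight p (s * t) = weight p s + weight p t := by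
  simp [weight]

@[simp]
lemma weight_of (a : α) : weight p (of a : TraceMonoid G) = p a :=
  rfl

lemma weight_mk_ofList (l : List α) :
    weight p (mk (FreeMonoid.ofList l) : TraceMonoid G) = (l.map p).sum := by
  induction l with
  | nil => simp
  | cons a l ih => rw [FreeMonoid.ofList_cons, mk_of_mul, weight_mul, ih, weight_of]; simp

lemma length_le_weight_mk (hp : ∀ a, 0 < p a) (x : FreeMonoid α) :
    x.length ≤ weight p (mk x : TraceMonoid G) := by
  induction x using FreeMonoid.inductionOn' with
  | one => simp
  | of_mul a x ih =>
    rw [mk_of_mul, weight_mul, weight_of, FreeMonoid.length_mul, FreeMonoid.length_of]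
    have := hp a
    omega

lemma eq_one_of_weight_eq_zero (hp : ∀ a, 0 < p a) {t : TraceMonoid G} (ht : weight p t = 0) :
    t = 1 := by
  obtain ⟨x, rfl⟩ := mk_surjective t
  have := length_le_weight_mk (G := G) p hp x
  rw [(FreeMonoid.length_eq_zero (a := x)).1 (by omega), map_one]

lemma finite_setOf_weight_le [Finite α] (hp : ∀ a, 0 < p a) (d : ℕ) :
    {t : TraceMonoid G | weight p t ≤ d}.Finite := by
  refine ((List.finite_length_le α d).image fun l => mk (FreeMonoid.ofList l)).subset ?_
  rintro t (ht : weight p t ≤ d)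
  obtain ⟨x, rfl⟩ := mk_surjective t
  exact ⟨x.toList, (length_le_weight_mk p hp x).trans ht, rfl⟩

end Weight

section Involution

noncomputable def leftDiv (a : α) (t : TraceMonoid G) : TraceMonoid G :=
  if h : of a ∣ t then h.choose else t

lemma of_mul_leftDiv {a : α} {t : TraceMonoid G} (h : of a ∣ t) : of a * leftDiv a t = t := by
  rw [leftDiv, dif_pos h]
  exact h.choose_spec.symm

lemma leftDiv_of_mul (a : α) (t : TraceMonoid G) : leftDiv a (of a * t) = t :=
  of_mul_left_cancel (of_mul_leftDiv (dvd_mul_right _ _))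

noncomputable def toggle (a : α) (x : Finset α × TraceMonoid G) : Finset α × TraceMonoid G :=
  if a ∈ x.1 then (x.1.erase a, of a * x.2) else (insert a x.1, leftDiv a x.2)

def Toggleable (a : α) (x : Finset α × TraceMonoid G) : Prop :=
  (∀ b ∈ x.1, b ≠ a → G.Adj a b) ∧ (a ∈ x.1 ∨ of a ∣ x.2)

lemma toggle_toggle {a : α} {x : Finset α × TraceMonoid G} (ha : Toggleable a x) :
    toggle a (toggle a x) = x := by
  obtain ⟨S, t⟩ := x
  by_cases haS : a ∈ S
  · simp [toggle, haS, leftDiv_of_mul]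
  · simp [toggle, haS, of_mul_leftDiv (ha.2.resolve_left haS)]

lemma toggleable_toggle_iff_of_mem {a b : α} {S : Finset α} {t : TraceMonoid G}
    (hS : G.IsClique (S : Set α)) (ha : a ∈ S) :
    Toggleable b (toggle a (S, t)) ↔ Toggleable b (S, t) := by
  have hS' : ∀ c ∈ S, ∀ d ∈ S, c ≠ d → G.Adj c d := fun c hc d hd => hS hc hd
  simp only [toggle, ha, if_true, Toggleable, Finset.mem_erase]
  by_cases hba : b = a
  · subst hba
    grind [dvd_mul_right]
  · rw [of_dvd_of_mul_iff (Ne.symm hba)]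
    grind [G.adj_symm]

lemma isClique_toggle {a : α} {x : Finset α × TraceMonoid G} (hS : G.IsClique (x.1 : Set α))
    (ha : Toggleable a x) : G.IsClique ((toggle a x).1 : Set α) := by
  unfold toggle
  split_ifs
  · exact hS.subset (by simp)
  · simpa using hS.insert fun b hb hab => ha.1 b hb (Ne.symm hab)

lemma toggleable_toggle_iff {a b : α} {x : Finset α × TraceMonoid G}
    (hS : G.IsClique (x.1 : Set α)) (ha : Toggleable a x) :
    Toggleable b (toggle a x) ↔ Toggleable b x := by
  obtain ⟨S, t⟩ := x
  by_cases haS : a ∈ S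
  · exact toggleable_toggle_iff_of_mem hS haS
  · have hmem : a ∈ (toggle a (S, t)).1 := by simp [toggle, haS]
    have := toggleable_toggle_iff_of_mem (b := b) (t := (toggle a (S, t)).2)
      (isClique_toggle hS ha) hmem
    rwa [toggle_toggle ha, iff_comm] at this

lemma sum_add_weight_toggle (p : α → ℕ) {a : α} {x : Finset α × TraceMonoid G}
    (ha : Toggleable a x) :
    ∑ i ∈ (toggle a x).1, p i + weight p (toggle a x).2 = ∑ i ∈ x.1, p i + weight p x.2 := by
  obtain ⟨S, t⟩ := x
  by_cases haS : a ∈ S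
  · simp only [toggle, haS, if_true, weight_mul, weight_of]
    rw [← Finset.add_sum_erase S p haS]
    ring
  · conv_rhs => rw [← of_mul_leftDiv (ha.2.resolve_left haS)]
    simp only [toggle, haS, if_false, weight_mul, weight_of, Finset.sum_insert haS]
    ring

lemma neg_one_pow_card_toggle (a : α) (x : Finset α × TraceMonoid G) :
    (-1 : ℤ) ^ (toggle a x).1.card = -(-1) ^ x.1.card := by
  unfold toggle
  split_ifs with haS
  · rw [← Finset.card_erase_add_one haS, pow_succ]
    ring
  · rw [Finset.card_insert_of_notMem haS, pow_succ]
    ring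

lemma exists_toggleable {x : Finset α × TraceMonoid G} (hS : G.IsClique (x.1 : Set α))
    (hx : x ≠ (∅, 1)) : ∃ a, Toggleable a x := by
  obtain ⟨S, t⟩ := x
  obtain ⟨a, haS⟩ | hS₀ := S.eq_empty_or_nonempty.symm
  · exact ⟨a, fun b hb hba => hS haS hb (Ne.symm hba), Or.inl haS⟩
  · subst hS₀
    obtain ⟨a, ha⟩ := exists_of_dvd fun ht : t = 1 => hx (by rw [ht])
    exact ⟨a, by simp, Or.inr ha⟩

noncomputable def toggleChosen (x : Finset α × TraceMonoid G) : Finset α × TraceMonoid G :=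
  if h : ∃ a, Toggleable a x then toggle h.choose x else x

/-- The chosen letter depends only on the set of toggleable letters, which toggling preserves. -/
lemma toggleChosen_toggleChosen {x : Finset α × TraceMonoid G} (hS : G.IsClique (x.1 : Set α)) :
    toggleChosen (toggleChosen x) = x := by
  by_cases h : ∃ a, Toggleable a x
  · have ha := h.choose_spec
    have hsame : (Toggleable · (toggle h.choose x)) = (Toggleable · x) :=
      funext fun b => propext (toggleable_toggle_iff hS ha)
    have h' : ∃ a, Toggleable a (toggle h.choose x) := ⟨_, (toggleable_toggle_iff hS ha).2 ha⟩
    have hchoose : ∀ (P : α → Prop) (hP : ∃ a, P a), P = (Toggleable · x) →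
        hP.choose = h.choose := by
      rintro P hP rfl
      rfl
    rw [show toggleChosen x = toggle h.choose x from dif_pos h, toggleChosen, dif_pos h',
      hchoose _ h' hsame, toggle_toggle ha]
  · have hfix : toggleChosen x = x := dif_neg h
    rw [hfix, hfix]

end Involution

lemma isClique_and_weight_eq_zero_iff (p : α → ℕ) (hp : ∀ a, 0 < p a)
    {x : Finset α × TraceMonoid G} :
    G.IsClique (x.1 : Set α) ∧ ∑ i ∈ x.1, p i + weight p x.2 = 0 ↔ x = (∅, 1) := by
  obtain ⟨S, t⟩ := x
  simp only [Prod.mk.injEq, Nat.add_eq_zero_iff, Finset.sum_eq_zero_iff]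
  constructor
  · rintro ⟨-, hS, ht⟩
    exact ⟨Finset.eq_empty_of_forall_notMem fun i hi => (hp i).ne' (hS i hi),
      eq_one_of_weight_eq_zero p hp ht⟩
  · rintro ⟨rfl, rfl⟩
    simp

theorem sum_neg_one_pow_card_of_ne_zero (p : α → ℕ) {d : ℕ} (hd : d ≠ 0)
    (s : Finset (Finset α × TraceMonoid G))
    (hs : ∀ x, x ∈ s ↔ G.IsClique (x.1 : Set α) ∧ ∑ i ∈ x.1, p i + weight p x.2 = d) :
    ∑ x ∈ s, (-1 : ℤ) ^ x.1.card = 0 := by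
  have htog : ∀ x ∈ s, ∃ a, Toggleable a x := fun x hx =>
    exists_toggleable ((hs x).1 hx).1 (by rintro rfl; simp [hs] at hx; omega)
  refine Finset.sum_involution (fun x _ => toggleChosen x) (fun x hx => ?_) (fun x hx hne => ?_)
    (fun x hx => ?_) (fun x hx => toggleChosen_toggleChosen ((hs x).1 hx).1) <;>
    rw [toggleChosen, dif_pos (htog x hx)]
  · rw [neg_one_pow_card_toggle, add_neg_cancel]
  · intro hfix
    have := neg_one_pow_card_toggle (htog x hx).choose x
    rw [hfix] at this
    exact hne (by linarith)
  · obtain ⟨hS, hw⟩ := (hs x).1 hx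
    exact (hs _).2 ⟨isClique_toggle hS (htog x hx).choose_spec,
      (sum_add_weight_toggle p (htog x hx).choose_spec).trans hw⟩

theorem sum_neg_one_pow_card (p : α → ℕ) (hp : ∀ a, 0 < p a) {d : ℕ}
    (s : Finset (Finset α × TraceMonoid G))
    (hs : ∀ x, x ∈ s ↔ G.IsClique (x.1 : Set α) ∧ ∑ i ∈ x.1, p i + weight p x.2 = d) :
    ∑ x ∈ s, (-1 : ℤ) ^ x.1.card = if d = 0 then 1 else 0 := by
  split_ifs with hd
  · subst hd
    have : s = {(∅, 1)} := by
      ext x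
      rw [hs, isClique_and_weight_eq_zero_iff p hp, Finset.mem_singleton]
    simp [this]
  · exact sum_neg_one_pow_card_of_ne_zero p hd s hs

end TraceMonoid

end

theorem LinearIndepOn.finrank_span_image_eq_ncard {k V ι : Type*} [Field k] [AddCommGroup V]
    [Module k V] {v : ι → V} {s : Set ι} (hs : LinearIndepOn k v s) :
    Module.finrank k (Submodule.span k (v '' s)) = s.ncard := by
  rw [Module.finrank, Set.ncard_def, ← toENat_rank_span_set hs, Cardinal.toNat_toENat]

namespace GraphAlgebra

open TraceMonoid

variable (k : Type*) [Field k] {n : ℕ} (G : SimpleGraph (Fin n))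

noncomputable def ofTrace : TraceMonoid G →* GraphAlgebra k G :=
  TraceMonoid.lift (fun i => RingQuot.mkAlgHom k (commRel k G) (FreeAlgebra.ι k i)) fun a b h => by
    simp only [Commute, SemiconjBy, ← map_mul]
    exact RingQuot.mkAlgHom_rel k ⟨a, b, h, rfl, rfl⟩

noncomputable def toMonoidAlgebra : GraphAlgebra k G →ₐ[k] MonoidAlgebra k (TraceMonoid G) :=
  RingQuot.liftAlgHom k ⟨FreeAlgebra.lift k fun i => MonoidAlgebra.of k _ (of i), by
    rintro _ _ ⟨a, b, h, rfl, rfl⟩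
    rw [map_mul, map_mul, FreeAlgebra.lift_ι_apply, FreeAlgebra.lift_ι_apply, ← map_mul, ← map_mul,
      of_mul_of_comm h]⟩

lemma toMonoidAlgebra_ofTrace (t : TraceMonoid G) :
    toMonoidAlgebra k G (ofTrace k G t) = MonoidAlgebra.of k _ t := by
  have : (toMonoidAlgebra k G : GraphAlgebra k G →* _).comp (ofTrace k G) =
      MonoidAlgebra.of k _ :=
    TraceMonoid.hom_ext fun a => by simp [ofTrace, toMonoidAlgebra]
  exact DFunLike.congr_fun this t

lemma linearIndependent_ofTrace : LinearIndependent k (ofTrace k G) := by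
  refine LinearIndependent.of_comp (toMonoidAlgebra k G).toLinearMap ?_
  have : (toMonoidAlgebra k G).toLinearMap ∘ ofTrace k G =
      MonoidAlgebra.basis (TraceMonoid G) k := by
    ext t
    simp [toMonoidAlgebra_ofTrace]
  rw [this]
  exact (MonoidAlgebra.basis (TraceMonoid G) k).linearIndependent

lemma ofTrace_mk_ofList (l : List (Fin n)) :
    ofTrace k G (mk (FreeMonoid.ofList l)) =
      RingQuot.mkAlgHom k (commRel k G) ((l.map (FreeAlgebra.ι k)).prod) := by
  simp [ofTrace, FreeMonoid.lift_apply, map_list_prod, Function.comp_def]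

variable (p : Fin n → ℕ)

lemma degComp_eq_span (d : ℕ) :
    degComp k G p d = Submodule.span k (ofTrace k G '' {t | weight p t = d}) := by
  refine congrArg _ (Set.ext fun a => ⟨?_, ?_⟩)
  · rintro ⟨l, hl, rfl⟩
    exact ⟨mk (FreeMonoid.ofList l), (weight_mk_ofList p l).trans hl, ofTrace_mk_ofList k G l⟩
  · rintro ⟨t, ht, rfl⟩
    obtain ⟨x, rfl⟩ := mk_surjective t
    exact ⟨x.toList, (weight_mk_ofList p _).symm.trans ht, ofTrace_mk_ofList k G _⟩

lemma finrank_degComp (d : ℕ) :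
    Module.finrank k (degComp k G p d) = {t : TraceMonoid G | weight p t = d}.ncard := by
  rw [degComp_eq_span,
    ((linearIndependent_ofTrace k G).linearIndepOn _).finrank_span_image_eq_ncard]

end GraphAlgebra

section Counting

open PowerSeries TraceMonoid

variable {n : ℕ} (G : SimpleGraph (Fin n)) (p : Fin n → ℕ)

lemma cliquePoly_eq_sum :
    cliquePoly G p = ∑ S ∈ (Finset.univ : Finset (Fin n)).powerset.filter
      (fun S : Finset (Fin n) => G.IsClique (S : Set (Fin n))),
        C ((-1 : ℤ) ^ S.card) * X ^ (∑ i ∈ S, p i) := by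
  ext j
  rw [cliquePoly, coeff_mk, map_sum]
  refine Finset.sum_congr rfl fun S _ => ?_
  rw [coeff_C_mul, coeff_X_pow, mul_ite, mul_one, mul_zero]
  simp only [eq_comm]

lemma coeff_hilbertSeries_mul_X_pow (k : Type*) [Field k] (m d : ℕ) :
    coeff d (hilbertSeries k G p * X ^ m) =
      ({t : TraceMonoid G | m + weight p t = d}.ncard : ℤ) := by
  rw [coeff_mul_X_pow', hilbertSeries]
  split_ifs with h
  · rw [coeff_mk, GraphAlgebra.finrank_degComp]
    congr 2
    ext t
    show weight p t = d - m ↔ m + weight p t = d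
    omega
  · have : {t : TraceMonoid G | m + weight p t = d} = ∅ :=
      Set.eq_empty_of_forall_notMem fun t (ht : m + weight p t = d) => by omega
    rw [this, Set.ncard_empty, Nat.cast_zero]

variable (hp : ∀ i, 0 < p i)

noncomputable def cliqueTracePairs (d : ℕ) : Finset (Finset (Fin n) × TraceMonoid G) :=
  ((Finset.univ : Finset (Fin n)).powerset.filter
      (fun S : Finset (Fin n) => G.IsClique (S : Set (Fin n))) ×ˢ
    (finite_setOf_weight_le p hp d).toFinset).filter
    fun x => ∑ i ∈ x.1, p i + weight p x.2 = d

lemma mem_cliqueTracePairs {d : ℕ} {x : Finset (Fin n) × TraceMonoid G} :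
    x ∈ cliqueTracePairs G p hp d ↔
      G.IsClique (x.1 : Set (Fin n)) ∧ ∑ i ∈ x.1, p i + weight p x.2 = d := by
  simp only [cliqueTracePairs, Finset.mem_filter, Finset.mem_product, Finset.mem_powerset,
    Finset.subset_univ, true_and, Set.Finite.mem_toFinset]
  constructor
  · rintro ⟨⟨hS, -⟩, hw⟩
    exact ⟨hS, hw⟩
  · rintro ⟨hS, hw⟩
    exact ⟨⟨hS, show weight p x.2 ≤ d by omega⟩, hw⟩

lemma coeff_hilbertSeries_mul_cliquePoly (k : Type*) [Field k] (d : ℕ) :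
    coeff d (hilbertSeries k G p * cliquePoly G p) =
      ∑ x ∈ cliqueTracePairs G p hp d, (-1 : ℤ) ^ x.1.card := by
  rw [cliquePoly_eq_sum, Finset.mul_sum, map_sum, cliqueTracePairs]
  conv_rhs => rw [Finset.sum_filter, Finset.sum_product]
  refine Finset.sum_congr rfl fun S _ => ?_
  rw [mul_left_comm, coeff_C_mul, coeff_hilbertSeries_mul_X_pow, ← Finset.sum_filter]
  simp only [Finset.sum_const, nsmul_eq_mul]
  rw [mul_comm]
  congr 2
  rw [← Set.ncard_coe_finset, Finset.coe_filter]
  congr 1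
  ext t
  simp only [Set.mem_ofPred_eq, Set.Finite.mem_toFinset]
  omega

end Counting

/-- **Main theorem (unsigned case).** The algebra
`A(Γ) = k⟨x_i : i ∈ V⟩/(x_a x_b − x_b x_a : ab ∈ E)`, graded with `|x_i| = p i`,
has Hilbert series the multiplicative inverse of the clique polynomial of Γ. -/
theorem stmt_5 (k : Type*) [Field k] {n : ℕ} (G : SimpleGraph (Fin n))
    (p : Fin n → ℕ) (hp : ∀ i, 0 < p i) :
    hilbertSeries k G p * cliquePoly G p = 1 := by
  ext d
  rw [coeff_hilbertSeries_mul_cliquePoly G p hp, PowerSeries.coeff_one,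
    TraceMonoid.sum_neg_one_pow_card p hp _ fun x => mem_cliqueTracePairs G p hp]
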